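/- arXiv:1207.1890 — 4 statements merged into one kernel-verified Lean document; each statement's English description precedes it below -/
import Mathlib

section
/- If K is a real field, then the field of rational functions K(X) is also a real field. -/
open Polynomial Finset

/-- A field is *real* (formally real) if `-1` is not a sum of squares. -/
def IsRealField (K : Type*) [Field K] : Prop :=
  ¬ ∃ (n : ℕ) (f : Fin n → K), (-1 : K) = ∑ i, f i ^ 2

/-- In a real field, a sum of squares is zero only if all terms are zero. -/
lemma sum_sq_eq_zero_iff {K : Type*} [Field K] (hK : IsRealField K) {n : ℕ}
    (a : Fin n → K) (h : ∑ i, a i ^ 2 = 0) : ∀ j, a j = 0 := by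
  intro j
  by_contra haj
  apply hK
  refine ⟨n, fun i => if i = j then 0 else a i / a j, ?_⟩
  have key : ∑ i, (if i = j then 0 else a i / a j) ^ 2
      = (∑ i ∈ univ.erase j, a i ^ 2) / a j ^ 2 := by
    rw [← Finset.sum_erase (s := univ)
      (f := fun i => (if i = j then 0 else a i / a j) ^ 2) (a := j) (h := by simp), Finset.sum_div]
    refine Finset.sum_congr rfl fun i hi => ?_
    rw [if_neg (Finset.mem_erase.mp hi).1, div_pow]
  have h2 : ∑ i ∈ univ.erase j, a i ^ 2 = -(a j ^ 2) := by
    have h3 : a j ^ 2 + ∑ x ∈ univ.erase j, a x ^ 2 = ∑ x : Fin n, a x ^ 2 :=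
      Finset.add_sum_erase univ (fun i => a i ^ 2) (Finset.mem_univ j)
    linear_combination h3 + h
  rw [key, h2, neg_div, div_self (pow_ne_zero 2 haj)]

lemma coeff_sq_two_mul {K : Type*} [Field K] (p : K[X]) {m : ℕ} (hm : p.natDegree ≤ m) :
    (p ^ 2).coeff (2 * m) = p.coeff m ^ 2 := by
  rcases eq_or_lt_of_le hm with h | h
  · subst h
    simpa [Polynomial.coeff_natDegree] using Polynomial.coeff_pow_mul_natDegree p 2
  · rw [Polynomial.coeff_eq_zero_of_natDegree_lt (lt_of_le_of_lt (Polynomial.natDegree_pow_le)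
      (by omega)), Polynomial.coeff_eq_zero_of_natDegree_lt h, zero_pow (by norm_num)]

/-- In `K[X]` over a real field, a sum of squares is zero only if all terms are zero. -/
lemma poly_sum_sq_eq_zero {K : Type*} [Field K] (hK : IsRealField K) {n : ℕ}
    (q : Fin n → K[X]) (h : ∑ i, q i ^ 2 = 0) : ∀ j, q j = 0 := by
  classical
  intro j
  by_contra hqj
  set s : Finset (Fin n) := univ.filter (fun i => q i ≠ 0) with hs
  have hjs : j ∈ s := by simp [hs, hqj]
  obtain ⟨i₀, hi₀s, hi₀⟩ := Finset.exists_mem_eq_sup s ⟨j, hjs⟩ (fun i => (q i).natDegree)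
  set m := s.sup fun i => (q i).natDegree with hm
  have hdeg : ∀ i, (q i).natDegree ≤ m := by
    intro i
    by_cases hqi : q i = 0
    · rw [hqi, Polynomial.natDegree_zero]; exact Nat.zero_le _
    · exact Finset.le_sup (f := fun i => (q i).natDegree) (Finset.mem_filter.mpr ⟨Finset.mem_univ i, hqi⟩)
  have hcoeff : ∑ i, (q i).coeff m ^ 2 = 0 := by
    have := congrArg (fun p => Polynomial.coeff p (2 * m)) h
    simpa [Polynomial.finset_sum_coeff, coeff_sq_two_mul _ (hdeg _)] using this
  have := sum_sq_eq_zero_iff hK _ hcoeff i₀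
  have hne : (q i₀).coeff m ≠ 0 := by
    rw [hi₀, Polynomial.coeff_natDegree]
    exact Polynomial.leadingCoeff_ne_zero.mpr ((Finset.mem_filter.mp hi₀s).2)
  exact hne this

theorem ratFunc_real_of_real (K : Type*) [Field K] (hK : IsRealField K) :
    IsRealField (RatFunc K) := by
  rintro ⟨n, f, hf⟩
  set φ := algebraMap K[X] (RatFunc K) with hφ
  set B : K[X] := ∏ i, (f i).denom with hB
  have hBne : B ≠ 0 := Finset.prod_ne_zero_iff.mpr fun i _ => RatFunc.denom_ne_zero _
  set g : Fin n → K[X] := fun i => (f i).num * ∏ j ∈ univ.erase i, (f j).denom with hg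
  have hgi : ∀ i, φ (g i) = f i * φ B := by
    intro i
    have hsplit : B = (f i).denom * ∏ j ∈ univ.erase i, (f j).denom :=
      (Finset.mul_prod_erase univ _ (Finset.mem_univ i)).symm
    have hdne : φ (f i).denom ≠ 0 := by
      simpa [hφ] using RatFunc.algebraMap_ne_zero (RatFunc.denom_ne_zero (f i))
    have hnum : φ (f i).num = f i * φ (f i).denom :=
      (div_eq_iff hdne).mp (RatFunc.num_div_denom (f i))
    have h1 : φ (g i) = φ (f i).num * φ (∏ j ∈ univ.erase i, (f j).denom) := by
      simp [hg, map_mul]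
    rw [h1, hsplit, map_mul, hnum]
    ring
  have key : ∑ i, g i ^ 2 + B ^ 2 = 0 := by
    apply RatFunc.algebraMap_injective K
    rw [map_add, map_sum, map_zero, map_pow]
    have : ∑ i, φ (g i ^ 2) = ∑ i, (f i * φ B) ^ 2 := by
      refine Finset.sum_congr rfl fun i _ => ?_
      rw [map_pow, hgi]
    rw [this]
    have : ∑ i, (f i * φ B) ^ 2 = (∑ i, f i ^ 2) * φ B ^ 2 := by
      rw [Finset.sum_mul]
      exact Finset.sum_congr rfl fun i _ => by ring
    rw [this, ← hf]
    ring
  have : ∑ i, (Fin.snoc g B : Fin (n + 1) → K[X]) i ^ 2 = 0 := by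
    rw [Fin.sum_univ_castSucc]
    simpa using key
  have := poly_sum_sq_eq_zero hK _ this (Fin.last n)
  simp [Fin.snoc_last] at this
  exact hBne this
end

section
/- A field K is real closed if and only if K is real (-1 is not a sum of squares), -1 is not a square in K, and the ring K[X]/(X^2+1) is an algebraically closed field. -/
open Polynomial

/-- A standard characterization of real closed fields: `K` is formally real,
every element of `K` is a square or the negative of a square, and every
polynomial of odd degree over `K` has a root in `K`. -/
def IsRealClosedField (K : Type*) [Field K] : Prop :=
  IsRealField K ∧ (∀ x : K, IsSquare x ∨ IsSquare (-x)) ∧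
    (∀ p : K[X], Odd p.natDegree → ∃ x : K, p.eval x = 0)

/-!
Write `L = K(√-1)`. If `K` is real closed, every element of `L` is a square, because
`√(a + b√-1)` can be built from the square roots of `(r ± a) / 2` with `r = √(a² + b²)`.
So `L` has no quadratic extension. Odd-degree extensions of `K` are trivial, so a Sylow
argument shows that every finite Galois extension of `K` has `2`-power degree. A Galois
extension of `K` that contains `L` must then equal `L`. Hence irreducible polynomials over `K`
have degree at most `2`, they split in `L`, and `L` is an algebraic closure of `K`.
Conversely, if `L` is algebraically closed, irreducible polynomials over `K` have degree at
most `[L : K] = 2`, which forces every odd-degree polynomial to have a root. Comparing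
coordinates in `x = (a + b√-1)²` shows that `x` or `-x` is a square.
-/

open Module IntermediateField

theorem isSumSq_iff_exists_sum_sq {R : Type*} [CommSemiring R] {x : R} :
    IsSumSq x ↔ ∃ (n : ℕ) (f : Fin n → R), x = ∑ i, f i ^ 2 := by
  constructor
  · intro h
    induction h with
    | zero => exact ⟨0, Fin.elim0, by simp⟩
    | sq_add a _ ih =>
      obtain ⟨n, f, rfl⟩ := ih
      exact ⟨n + 1, Fin.cons a f, by simp [Fin.sum_univ_succ, sq]⟩
  · rintro ⟨n, f, rfl⟩
    exact IsSumSq.sum_sq _ _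

section Semireal

variable {K : Type*} [Field K]

theorem isRealField_iff_isSemireal : IsRealField K ↔ IsSemireal K := by
  rw [isSemireal_iff_not_isSumSq_neg_one, isSumSq_iff_exists_sum_sq]
  rfl

theorem isRealClosedField_iff_isRealClosed : IsRealClosedField K ↔ IsRealClosed K where
  mp := fun ⟨hr, hsq, hodd⟩ =>
    { toIsSemireal := isRealField_iff_isSemireal.mp hr
      isSquare_or_isSquare_neg := hsq
      exists_isRoot_of_odd_natDegree := hodd _ }
  mpr h := ⟨isRealField_iff_isSemireal.mpr h.toIsSemireal, h.isSquare_or_isSquare_neg,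
    fun _ hp => IsRealClosed.exists_isRoot_of_odd_natDegree hp⟩

variable [IsSemireal K]

instance IsSemireal.isFormallyReal : IsFormallyReal K :=
  .of_eq_zero_of_eq_zero_of_mul_self_add fun {s a} hs h => by
    by_contra ha
    refine IsSemireal.not_isSumSq_neg_one K ?_
    have : (-1 : K) = a⁻¹ * a⁻¹ * s := by
      rw [eq_neg_of_add_eq_zero_right h]
      field_simp
    exact this ▸ (IsSumSq.mul_self _).mul hs

theorem IsSemireal.not_isSquare_neg_one : ¬ IsSquare (-1 : K) :=
  fun h => IsSemireal.not_isSumSq_neg_one K h.isSumSq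

end Semireal

section QuadraticExtension

variable {K L : Type*} [Field K] [Field L] [Algebra K L] {j : L}

theorem eq_zero_of_algebraMap_add_algebraMap_mul_eq_zero (hj : j ∉ Set.range (algebraMap K L))
    {a b : K} (h : algebraMap K L a + algebraMap K L b * j = 0) : a = 0 ∧ b = 0 := by
  obtain rfl | hb := eq_or_ne b 0
  · simpa using h
  · refine absurd ⟨-a / b, ?_⟩ hj
    rw [map_div₀, map_neg, div_eq_iff (by simpa using hb)]
    linear_combination -h

theorem exists_eq_algebraMap_add_algebraMap_mul (h2 : finrank K L = 2)
    (hj : j ∉ Set.range (algebraMap K L)) (z : L) :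
    ∃ a b : K, z = algebraMap K L a + algebraMap K L b * j := by
  have hli : LinearIndependent K ![1, j] := LinearIndependent.pair_iff.mpr fun a b h =>
    eq_zero_of_algebraMap_add_algebraMap_mul_eq_zero hj (by simpa [Algebra.smul_def] using h)
  have hspan := hli.span_eq_top_of_card_eq_finrank (by simp [h2])
  obtain ⟨a, b, hab⟩ := Submodule.mem_span_pair.mp
    (by rw [← Matrix.range_cons_cons_empty 1 j ![], hspan]; trivial :
      z ∈ Submodule.span K {1, j})
  exact ⟨a, b, by simpa [Algebra.smul_def] using hab.symm⟩

theorem notMem_range_algebraMap_of_mul_self_eq_neg_one (hK : ¬ IsSquare (-1 : K)) {i : L}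
    (hi : i * i = -1) : i ∉ Set.range (algebraMap K L) := by
  rintro ⟨c, rfl⟩
  exact hK ⟨c, (algebraMap K L).injective (by simpa using hi.symm)⟩

end QuadraticExtension

theorem irreducible_X_sq_add_one {K : Type*} [Field K] (hK : ¬ IsSquare (-1 : K)) :
    Irreducible (X ^ 2 + 1 : K[X]) := by
  rw [← sub_neg_eq_add, ← C_1, ← C_neg, X_pow_sub_C_irreducible_iff_of_prime Nat.prime_two]
  exact fun b hb => hK ⟨b, by rw [← hb, sq]⟩

theorem AdjoinRoot.root_X_sq_add_one_mul_self {R : Type*} [CommRing R] :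
    root (X ^ 2 + 1 : R[X]) * root (X ^ 2 + 1) = -1 := by
  have := eval₂_root (X ^ 2 + 1 : R[X])
  simp only [eval₂_add, eval₂_X_pow, eval₂_one] at this
  linear_combination this

theorem finrank_adjoinRoot_X_sq_add_one {K : Type*} [Field K] :
    finrank K (AdjoinRoot (X ^ 2 + 1 : K[X])) = 2 := by
  rw [(AdjoinRoot.powerBasis' (g := X ^ 2 + 1) (by monicity!)).finrank,
    AdjoinRoot.powerBasis'_dim]
  compute_degree!

section FiniteExtension

variable {K : Type*} [Field K]

theorem natDegree_le_finrank_of_aeval_eq_zero {E : Type*} [Field E] [Algebra K E]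
    [FiniteDimensional K E] {p : K[X]} (hp : Irreducible p) {x : E} (hx : aeval x p = 0) :
    p.natDegree ≤ finrank K E := by
  rw [← natDegree_mul_C (inv_ne_zero (leadingCoeff_ne_zero.mpr hp.ne_zero)),
    minpoly.eq_of_irreducible hp hx]
  exact minpoly.natDegree_le x

theorem finrank_eq_one_of_forall_exists_isRoot {E : Type*} [Field E] [Algebra K E]
    [FiniteDimensional K E]
    (h : ∀ p : K[X], Irreducible p → p.natDegree ∣ finrank K E → ∃ x, p.IsRoot x) :
    finrank K E = 1 := by
  refine IntermediateField.bot_eq_top_iff_finrank_eq_one.mp (eq_top_iff.mpr fun x _ => ?_)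
  have hx : IsIntegral K x := .of_finite K x
  obtain ⟨y, hy⟩ := h _ (minpoly.irreducible hx) (minpoly.degree_dvd hx)
  have h1 := degree_eq_one_of_irreducible_of_root (minpoly.irreducible hx) hy
  rw [IntermediateField.mem_bot, ← RingHom.coe_range, SetLike.mem_coe,
    ← minpoly.natDegree_eq_one_iff]
  exact natDegree_eq_of_degree_eq_some h1

theorem finrank_eq_one_of_odd_finrank
    (h : ∀ p : K[X], Odd p.natDegree → ∃ x, p.IsRoot x) {E : Type*} [Field E] [Algebra K E]
    [FiniteDimensional K E] (hE : Odd (finrank K E)) : finrank K E = 1 :=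
  finrank_eq_one_of_forall_exists_isRoot fun p _ hp => h p (hE.of_dvd_nat hp)

theorem exists_finrank_eq_two_pow_of_isGalois
    (h : ∀ p : K[X], Odd p.natDegree → ∃ x, p.IsRoot x) (M : Type*) [Field M] [Algebra K M]
    [FiniteDimensional K M] [IsGalois K M] : ∃ n, finrank K M = 2 ^ n := by
  have : Fact (Nat.Prime 2) := ⟨Nat.prime_two⟩
  obtain ⟨P⟩ : Nonempty (Sylow 2 Gal(M/K)) := inferInstance
  obtain ⟨n, hn⟩ := P.isPGroup'.exists_card_eq
  have hodd : Odd (finrank K (fixedField P.1)) := by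
    rw [finrank_eq_fixingSubgroup_index, fixingSubgroup_fixedField, Nat.odd_iff]
    exact Nat.two_dvd_ne_zero.mp P.not_dvd_index
  refine ⟨n, ?_⟩
  rw [← finrank_mul_finrank K (fixedField P.1) M, finrank_eq_one_of_odd_finrank h hodd, one_mul,
    finrank_fixedField_eq_card, hn]

end FiniteExtension

theorem Polynomial.SplittingField.exists_aeval_eq_zero_of_dvd {K : Type*} [Field K]
    {f g : K[X]} (hf : f ≠ 0) (hg : g ∣ f) (hg0 : g.degree ≠ 0) :
    ∃ x : SplittingField f, aeval x g = 0 := by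
  obtain ⟨x, hx⟩ := ((SplittingField.splits f).of_dvd (map_ne_zero hf) (map_dvd _ hg))
    |>.exists_eval_eq_zero (by rwa [degree_map])
  exact ⟨x, by rwa [eval_map_algebraMap] at hx⟩

section Squares

variable {F : Type*} [Field F] [NeZero (2 : F)] (hF : ∀ x : F, IsSquare x)
include hF

theorem exists_isRoot_of_natDegree_eq_two {f : F[X]} (hf : f.natDegree = 2) :
    ∃ x, f.IsRoot x := by
  have ha : f.coeff 2 ≠ 0 := by
    rw [← hf]; exact leadingCoeff_ne_zero.mpr (by rintro rfl; simp at hf)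
  obtain ⟨s, hs⟩ := hF (discrim (f.coeff 2) (f.coeff 1) (f.coeff 0))
  obtain ⟨x, hx⟩ := exists_quadratic_eq_zero ha ⟨s, hs⟩
  refine ⟨x, ?_⟩
  rw [IsRoot, eval_eq_sum_range, hf]
  simp only [Finset.sum_range_succ, Finset.sum_range_zero]
  linear_combination hx

theorem splits_of_natDegree_le_two {f : F[X]} (hf : f.natDegree ≤ 2) : f.Splits := by
  obtain hf | hf := hf.lt_or_eq
  · exact .of_natDegree_le_one (by omega)
  obtain ⟨x, hx⟩ := exists_isRoot_of_natDegree_eq_two hF hf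
  rw [← mul_divByMonic_eq_iff_isRoot.mpr hx, splits_X_sub_C_mul_iff]
  refine .of_natDegree_le_one ?_
  rw [natDegree_divByMonic _ (monic_X_sub_C x), hf, natDegree_X_sub_C]

theorem finrank_ne_two_of_forall_isSquare (E : Type*) [Field E] [Algebra F E] : finrank F E ≠ 2 := by
  intro h2
  have : FiniteDimensional F E := .of_finrank_eq_succ h2
  have h1 := finrank_eq_one_of_forall_exists_isRoot (E := E) fun p hp hdvd => by
    rw [h2, Nat.dvd_prime Nat.prime_two] at hdvd
    rcases hdvd with hdvd | hdvd
    · exact exists_root_of_degree_eq_one (degree_eq_iff_natDegree_eq_of_pos one_pos |>.mpr hdvd)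
    · exact exists_isRoot_of_natDegree_eq_two hF hdvd
  omega

theorem finrank_eq_one_of_isGalois_of_finrank_eq_two_pow (M : Type*) [Field M] [Algebra F M]
    [FiniteDimensional F M] [IsGalois F M] {n : ℕ} (hn : finrank F M = 2 ^ n) :
    finrank F M = 1 := by
  cases n with
  | zero => exact hn
  | succ m =>
    have : Fact (Nat.Prime 2) := ⟨Nat.prime_two⟩
    obtain ⟨H, hH⟩ := Sylow.exists_subgroup_card_pow_prime (G := Gal(M/F)) 2 (n := m)
      (by rw [IsGalois.card_aut_eq_finrank, hn]; exact pow_dvd_pow 2 m.le_succ)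
    have htower := finrank_mul_finrank F (fixedField H) M
    rw [finrank_fixedField_eq_card, hH, hn, pow_succ'] at htower
    exact absurd (Nat.eq_of_mul_eq_mul_right (by positivity) htower)
      (finrank_ne_two_of_forall_isSquare hF (fixedField H))

end Squares

namespace IsRealClosed

variable {K : Type*} [Field K] [IsRealClosed K]

theorem isSquare_add {x y : K} (hx : IsSquare x) (hy : IsSquare y) : IsSquare (x + y) := by
  rcases isSquare_or_isSquare_neg (x + y) with h | h
  · exact h
  · rw [IsFormallyReal.eq_zero_of_isSumSq_of_neg_isSumSq (hx.isSumSq.add hy.isSumSq) h.isSumSq]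
    exact .zero

theorem isSquare_of_isSquare_add_of_isSquare_mul {u v : K} (hs : IsSquare (u + v))
    (hp : IsSquare (u * v)) : IsSquare u := by
  by_contra hu
  have hu' : IsSquare (-u) := isSquare_neg_of_not_isSquare hu
  rcases isSquare_or_isSquare_neg v with hv | hv
  · have huv : u * v = 0 := IsFormallyReal.eq_zero_of_isSumSq_of_neg_isSumSq hp.isSumSq
      (by simpa only [neg_mul] using (hu'.mul hv).isSumSq)
    have hu0 : u ≠ 0 := by rintro rfl; exact hu .zero
    have hv0 : v = 0 := (mul_eq_zero.mp huv).resolve_left hu0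
    exact hu (by simpa only [hv0, add_zero] using hs)
  · have huv : u + v = 0 := IsFormallyReal.eq_zero_of_isSumSq_of_neg_isSumSq hs.isSumSq
      (by simpa only [neg_add] using (isSquare_add hu' hv).isSumSq)
    exact hu (by simpa only [← eq_neg_of_add_eq_zero_left huv] using hv)

/-- Every `a + b √-1` has a square root `c + d √-1`. -/
theorem exists_mul_self_sub_mul_self_eq (a b : K) :
    ∃ c d : K, c * c - d * d = a ∧ 2 * (c * d) = b := by
  obtain ⟨s, hs⟩ := isSquare_add (.mul_self a) (.mul_self b)
  -- `r = √(a² + b²)`, chosen to be a square itself, so that `r ± a` are squares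
  obtain ⟨r, hr, hrr⟩ : ∃ r, IsSquare r ∧ a * a + b * b = r * r := by
    rcases isSquare_or_isSquare_neg s with h | h
    · exact ⟨s, h, hs⟩
    · exact ⟨-s, h, by rw [hs]; ring⟩
  have h2r : IsSquare ((r + a) + (r - a)) := by
    simpa only [add_add_sub_cancel] using isSquare_add hr hr
  have hb : IsSquare ((r + a) * (r - a)) := ⟨b, by linear_combination -hrr⟩
  have hpos : IsSquare (r + a) := isSquare_of_isSquare_add_of_isSquare_mul h2r hb
  have hneg : IsSquare (r - a) := isSquare_of_isSquare_add_of_isSquare_mul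
    (by rwa [add_comm]) (by rwa [mul_comm])
  have h2 : IsSquare (2⁻¹ : K) := (one_add_one_eq_two (R := K) ▸ isSquare_add .one .one).inv
  obtain ⟨c, hc⟩ := hpos.mul h2
  obtain ⟨d, hd⟩ := hneg.mul h2
  have hcd : 2 * (c * d) * (2 * (c * d)) = b * b := by
    linear_combination (-4 * d * d) * hc - 2 * (r + a) * hd - hrr
  have hdiff : c * c - d * d = a := by linear_combination hd - hc
  rcases mul_self_eq_mul_self_iff.mp hcd with h | h
  · exact ⟨c, d, hdiff, h⟩
  · exact ⟨c, -d, by rwa [neg_mul_neg], by linear_combination -h⟩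

theorem isSquare_of_finrank_eq_two {L : Type*} [Field L] [Algebra K L] (h2 : finrank K L = 2)
    {i : L} (hi : i * i = -1) (z : L) : IsSquare z := by
  obtain ⟨a, b, rfl⟩ := exists_eq_algebraMap_add_algebraMap_mul h2
    (notMem_range_algebraMap_of_mul_self_eq_neg_one IsSemireal.not_isSquare_neg_one hi) z
  obtain ⟨c, d, rfl, rfl⟩ := exists_mul_self_sub_mul_self_eq a b
  refine ⟨algebraMap K L c + algebraMap K L d * i, ?_⟩
  simp only [map_sub, map_mul, map_ofNat]
  linear_combination (-(algebraMap K L d * algebraMap K L d)) * hi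

theorem natDegree_le_two_of_irreducible {p : K[X]} (hp : Irreducible p) : p.natDegree ≤ 2 := by
  have hX := irreducible_X_sq_add_one (K := K) IsSemireal.not_isSquare_neg_one
  -- The factor `X ^ 2 + 1` puts `K(√-1)`, in which everything is a square, inside the splitting
  -- field `M`; then `M` has `2`-power degree over `K(√-1)`, hence equals it.
  let M := SplittingField (p * (X ^ 2 + 1))
  have : IsGalois K M := ⟨⟩
  have hf : p * (X ^ 2 + 1) ≠ 0 := mul_ne_zero hp.ne_zero hX.ne_zero
  obtain ⟨x, hx⟩ := SplittingField.exists_aeval_eq_zero_of_dvd hf (dvd_mul_right _ _)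
    (degree_pos_of_irreducible hp).ne'
  obtain ⟨i, hi⟩ := SplittingField.exists_aeval_eq_zero_of_dvd hf (dvd_mul_left _ _)
    (degree_pos_of_irreducible hX).ne'
  have hF : finrank K K⟮i⟯ = 2 := by
    rw [adjoin.finrank (.of_finite K i), ← minpoly.eq_of_irreducible_of_monic hX hi
      (monic_X_pow_add_C 1 two_ne_zero)]
    compute_degree!
  have : CharZero K⟮i⟯ := charZero_of_injective_algebraMap (algebraMap K K⟮i⟯).injective
  have hFsq := isSquare_of_finrank_eq_two hF (i := AdjoinSimple.gen K i)
    (Subtype.ext (by simpa [sq, add_eq_zero_iff_eq_neg] using hi))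
  obtain ⟨n, hn⟩ := exists_finrank_eq_two_pow_of_isGalois (K := K)
    (fun _ hodd => exists_isRoot_of_odd_natDegree hodd) M
  obtain ⟨m, -, hm⟩ := (Nat.dvd_prime_pow Nat.prime_two).mp
    (Dvd.intro_left _ ((finrank_mul_finrank K K⟮i⟯ M).trans hn))
  calc p.natDegree ≤ finrank K M := natDegree_le_finrank_of_aeval_eq_zero hp hx
    _ = finrank K K⟮i⟯ * finrank K⟮i⟯ M := (finrank_mul_finrank K K⟮i⟯ M).symm
    _ = 2 := by rw [hF, finrank_eq_one_of_isGalois_of_finrank_eq_two_pow hFsq M hm]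

theorem isAlgClosed_of_finrank_eq_two {L : Type*} [Field L] [Algebra K L]
    (h2 : finrank K L = 2) {i : L} (hi : i * i = -1) : IsAlgClosed L := by
  have : FiniteDimensional K L := .of_finrank_eq_succ h2
  have : CharZero L := charZero_of_injective_algebraMap (algebraMap K L).injective
  refine (IsAlgClosure.of_splits (R := K) fun p _ hp => ?_).isAlgClosed
  exact splits_of_natDegree_le_two (isSquare_of_finrank_eq_two h2 hi)
    (natDegree_map_le.trans (natDegree_le_two_of_irreducible hp))

end IsRealClosed

section AlgClosedQuadraticExtension

variable {K : Type*} [Field K]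

theorem exists_isRoot_of_odd_natDegree_of_forall_natDegree_le_two
    (h : ∀ q : K[X], Irreducible q → q.natDegree ≤ 2) {p : K[X]} (hp : Odd p.natDegree) :
    ∃ x, p.IsRoot x := by
  induction hn : p.natDegree using Nat.strong_induction_on generalizing p with
  | _ n ih =>
    have hp0 : p ≠ 0 := by rintro rfl; simp at hp
    have hpu : ¬ IsUnit p := fun hu => by simp [natDegree_eq_zero_of_isUnit hu] at hp
    obtain ⟨q, hq, r, rfl⟩ := WfDvdMonoid.exists_irreducible_factor hpu hp0
    have hr0 : r ≠ 0 := right_ne_zero_of_mul hp0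
    rw [natDegree_mul hq.ne_zero hr0] at hp hn
    have hq0 := hq.natDegree_pos
    obtain hq1 | hq2 : q.natDegree = 1 ∨ q.natDegree = 2 := by have := h q hq; omega
    · obtain ⟨x, hx⟩ := exists_root_of_degree_eq_one (degree_eq_iff_natDegree_eq_of_pos one_pos
        |>.mpr hq1)
      exact ⟨x, by simp [hx.eq_zero]⟩
    · have hr : Odd r.natDegree := by rw [hq2] at hp; exact (Nat.odd_add'.mp hp).mpr even_two
      obtain ⟨x, hx⟩ := ih r.natDegree (by omega) hr rfl
      exact ⟨x, by simp [hx.eq_zero]⟩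

theorem Irreducible.natDegree_le_finrank {L : Type*} [Field L] [Algebra K L] [IsAlgClosed L]
    [FiniteDimensional K L] {p : K[X]} (hp : Irreducible p) : p.natDegree ≤ finrank K L := by
  obtain ⟨x, hx⟩ := IsAlgClosed.exists_aeval_eq_zero L p (degree_pos_of_irreducible hp).ne'
  exact natDegree_le_finrank_of_aeval_eq_zero hp hx

theorem isSquare_or_isSquare_neg_of_isAlgClosed [NeZero (2 : K)] (hK : ¬ IsSquare (-1 : K))
    {L : Type*} [Field L] [Algebra K L] [IsAlgClosed L] (h2 : finrank K L = 2) (x : K) :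
    IsSquare x ∨ IsSquare (-x) := by
  obtain ⟨i, hi⟩ := IsAlgClosed.exists_pow_nat_eq (-1 : L) (n := 2) two_pos
  have hi' := notMem_range_algebraMap_of_mul_self_eq_neg_one hK (i := i) (by rwa [← sq])
  obtain ⟨z, hz⟩ := IsAlgClosed.exists_pow_nat_eq (algebraMap K L x) (n := 2) two_pos
  obtain ⟨a, b, rfl⟩ := exists_eq_algebraMap_add_algebraMap_mul h2 hi' z
  obtain ⟨hre, him⟩ := eq_zero_of_algebraMap_add_algebraMap_mul_eq_zero hi'
    (a := a * a - b * b - x) (b := 2 * (a * b)) (by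
      simp only [map_sub, map_mul, map_ofNat]
      linear_combination hz - (algebraMap K L b) ^ 2 * hi)
  rcases mul_eq_zero.mp ((mul_eq_zero.mp him).resolve_left two_ne_zero) with rfl | rfl
  · exact .inr ⟨b, by linear_combination hre⟩
  · exact .inl ⟨a, by linear_combination -hre⟩

theorem IsRealClosed.of_isAlgClosed [IsSemireal K] {L : Type*} [Field L] [Algebra K L]
    [IsAlgClosed L] (h2 : finrank K L = 2) : IsRealClosed K where
  isSquare_or_isSquare_neg :=
    isSquare_or_isSquare_neg_of_isAlgClosed IsSemireal.not_isSquare_neg_one h2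
  exists_isRoot_of_odd_natDegree :=
    have : FiniteDimensional K L := .of_finrank_eq_succ h2
    exists_isRoot_of_odd_natDegree_of_forall_natDegree_le_two fun _ hq =>
      h2 ▸ hq.natDegree_le_finrank (L := L)

end AlgClosedQuadraticExtension

theorem realClosed_iff_adjoin_i_algClosed (K : Type*) [Field K] :
    IsRealClosedField K ↔
      (IsRealField K ∧ ¬ IsSquare (-1 : K) ∧
        ∃ hf : IsField (K[X] ⧸ Ideal.span {(X : K[X]) ^ 2 + 1}),
          @IsAlgClosed (K[X] ⧸ Ideal.span {(X : K[X]) ^ 2 + 1}) hf.toField) := by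
  rw [isRealClosedField_iff_isRealClosed, isRealField_iff_isSemireal]
  -- The quotient is `AdjoinRoot (X ^ 2 + 1)`, and `hf.toField` has the same underlying ring as
  -- `AdjoinRoot.instField`, so `RingEquiv.refl` transports algebraic closedness between them.
  constructor
  · intro hK
    have hns : ¬ IsSquare (-1 : K) := IsSemireal.not_isSquare_neg_one
    have : Fact (Irreducible (X ^ 2 + 1 : K[X])) := ⟨irreducible_X_sq_add_one hns⟩
    have hL : IsAlgClosed (AdjoinRoot (X ^ 2 + 1 : K[X])) :=
      IsRealClosed.isAlgClosed_of_finrank_eq_two finrank_adjoinRoot_X_sq_add_one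
        AdjoinRoot.root_X_sq_add_one_mul_self
    let hf := Field.toIsField (AdjoinRoot (X ^ 2 + 1 : K[X]))
    exact ⟨inferInstance, hns, hf,
      @IsAlgClosed.of_ringEquiv _ AdjoinRoot.instField _ hf.toField (RingEquiv.refl _) hL⟩
  · rintro ⟨hK, hns, hf, hL⟩
    have : Fact (Irreducible (X ^ 2 + 1 : K[X])) := ⟨irreducible_X_sq_add_one hns⟩
    have : IsAlgClosed (AdjoinRoot (X ^ 2 + 1 : K[X])) :=
      @IsAlgClosed.of_ringEquiv _ hf.toField _ AdjoinRoot.instField (RingEquiv.refl _) hL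
    exact IsRealClosed.of_isAlgClosed finrank_adjoinRoot_X_sq_add_one
end

section
/- Let L be a differential field extension of a differential field K, generated as a field extension of K by an element u with u' = u and u ≠ 0, such that L and K have the same constants and u is transcendental over K. Then for every nonzero constant λ of K there is a K-differential automorphism of L sending u to λu. -/
open Polynomial
open scoped nonZeroDivisors

theorem liftAlgHom_algebraMap_aux {K : Type*} [Field K] {L : Type*} [Field L]
    {S : Type*} [CommSemiring S] [Algebra S K[X]] [Algebra S L]
    (φ : K[X] →ₐ[S] L) (hφ : K[X]⁰ ≤ L⁰.comap φ) (p : K[X]) :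
    RatFunc.liftAlgHom φ hφ (algebraMap K[X] (RatFunc K) p) = φ p := by
  have h := RatFunc.liftAlgHom_apply_div' φ hφ p 1
  simpa using h

/-- Let `L = K(u)` with `u' = u`, `u ≠ 0`, `u` transcendental over `K`, and `L`
and `K` with the same constants. Then for every nonzero constant `λ` of `K`
there is a `K`-differential automorphism of `L` with `u ↦ λu`. -/
theorem exists_diff_aut_smul_exp
    (L : Type*) [Field L] (D : L → L)
    (hadd : ∀ x y : L, D (x + y) = D x + D y)
    (hmul : ∀ x y : L, D (x * y) = x * D y + D x * y)
    (K : Subfield L) (hKD : ∀ x ∈ K, D x ∈ K)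
    (u : L) (hu : D u = u) (hu0 : u ≠ 0)
    (htr : Transcendental K u)
    (hgen : Subfield.closure ((K : Set L) ∪ {u}) = ⊤)
    (hconst : ∀ x : L, D x = 0 → x ∈ K) :
    ∀ lam : L, lam ∈ K → D lam = 0 → lam ≠ 0 →
      ∃ σ : L ≃+* L, (∀ x ∈ K, σ x = x) ∧ (∀ x : L, σ (D x) = D (σ x)) ∧
        σ u = lam * u := by
  intro lam hlamK hlamD hlam0
  -- basic derivation facts
  have hD0 : D 0 = 0 := by simpa using hadd 0 0
  have hD1 : D 1 = 0 := by simpa using hmul 1 1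
  -- transcendence of lam * u
  set c : K := ⟨lam, hlamK⟩ with hcdef
  have hc0 : c ≠ 0 := fun h => hlam0 (by simpa [hcdef] using congrArg Subtype.val h)
  have htr2 : Transcendental K (lam * u) := by
    have h := htr.aeval (C c * X) (by simp [natDegree_C_mul_X _ hc0])
      (by rw [leadingCoeff, natDegree_C_mul_X _ hc0]
          simpa using mem_nonZeroDivisors_of_ne_zero hc0)
    have he : (aeval u) (C c * X) = lam * u := by
      rw [map_mul, aeval_C, aeval_X]; rfl
    rwa [he] at h
  -- the two lifted algebra homs
  set φ₁ : K[X] →ₐ[K] L := aeval u with hφ₁def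
  set φ₂ : K[X] →ₐ[K] L := aeval (lam * u) with hφ₂def
  have hinj₁ : Function.Injective φ₁ := transcendental_iff_injective.mp htr
  have hinj₂ : Function.Injective φ₂ := transcendental_iff_injective.mp htr2
  set Φ₁ : RatFunc K →ₐ[K] L := RatFunc.liftAlgHom φ₁
    (nonZeroDivisors_le_comap_nonZeroDivisors_of_injective _ hinj₁) with hΦ₁def
  set Φ₂ : RatFunc K →ₐ[K] L := RatFunc.liftAlgHom φ₂
    (nonZeroDivisors_le_comap_nonZeroDivisors_of_injective _ hinj₂) with hΦ₂def
  have hΦ₁p : ∀ p : K[X], Φ₁ (algebraMap K[X] (RatFunc K) p) = φ₁ p :=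
    liftAlgHom_algebraMap_aux _ _
  have hΦ₂p : ∀ p : K[X], Φ₂ (algebraMap K[X] (RatFunc K) p) = φ₂ p :=
    liftAlgHom_algebraMap_aux _ _
  have hΦ₁inj : Function.Injective Φ₁ := RingHom.injective Φ₁.toRingHom
  have hΦ₂inj : Function.Injective Φ₂ := RingHom.injective Φ₂.toRingHom
  have hΦ₁X : Φ₁ (algebraMap K[X] (RatFunc K) X) = u := by rw [hΦ₁p]; simp [hφ₁def]
  have hΦ₂X : Φ₂ (algebraMap K[X] (RatFunc K) X) = lam * u := by rw [hΦ₂p]; simp [hφ₂def]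
  have hΦ₁C : ∀ a : K, Φ₁ (algebraMap K (RatFunc K) a) = (a : L) := fun a => Φ₁.commutes a
  have hΦ₂C : ∀ a : K, Φ₂ (algebraMap K (RatFunc K) a) = (a : L) := fun a => Φ₂.commutes a
  -- surjectivity
  have hsurj : ∀ (Φ : RatFunc K →ₐ[K] L), (u ∈ Φ.toRingHom.fieldRange) →
      Function.Surjective Φ := by
    intro Φ huΦ x
    have hle : Subfield.closure ((K : Set L) ∪ {u}) ≤ Φ.toRingHom.fieldRange := by
      apply Subfield.closure_le.mpr
      rintro y (hy | hy)
      · exact ⟨algebraMap K (RatFunc K) ⟨y, hy⟩, Φ.commutes _⟩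
      · simp only [Set.mem_singleton_iff] at hy; subst hy; exact huΦ
    rw [hgen] at hle
    exact hle (Subfield.mem_top x)
  have hsurj₁ : Function.Surjective Φ₁ := hsurj Φ₁ ⟨algebraMap K[X] (RatFunc K) X, hΦ₁X⟩
  have hsurj₂ : Function.Surjective Φ₂ := by
    apply hsurj Φ₂
    have h1 : lam * u ∈ Φ₂.toRingHom.fieldRange := ⟨algebraMap K[X] (RatFunc K) X, hΦ₂X⟩
    have h2 : lam⁻¹ ∈ Φ₂.toRingHom.fieldRange :=
      ⟨algebraMap K (RatFunc K) ⟨lam⁻¹, K.inv_mem hlamK⟩, Φ₂.commutes _⟩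
    have h3 := mul_mem h2 h1
    have he : lam⁻¹ * (lam * u) = u := by field_simp
    rwa [he] at h3
  -- the equivalences
  set E₁ : RatFunc K ≃+* L := RingEquiv.ofBijective Φ₁.toRingHom ⟨hΦ₁inj, hsurj₁⟩ with hE₁def
  set E₂ : RatFunc K ≃+* L := RingEquiv.ofBijective Φ₂.toRingHom ⟨hΦ₂inj, hsurj₂⟩ with hE₂def
  set σ : L ≃+* L := E₁.symm.trans E₂ with hσdef
  have hσK : ∀ x ∈ K, σ x = x := by
    intro x hx
    obtain ⟨a, rfl⟩ : ∃ a : K, (a : L) = x := ⟨⟨x, hx⟩, rfl⟩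
    have h1 : E₁ (algebraMap K (RatFunc K) a) = (a : L) := hΦ₁C a
    have h2 : E₁.symm (a : L) = algebraMap K (RatFunc K) a := by
      rw [← h1, RingEquiv.symm_apply_apply]
    show E₂ (E₁.symm (a : L)) = (a : L)
    rw [h2]; exact hΦ₂C _
  have hσu : σ u = lam * u := by
    have h2 : E₁.symm u = algebraMap K[X] (RatFunc K) X := by
      rw [← hΦ₁X]
      exact E₁.symm_apply_apply _
    show E₂ (E₁.symm u) = lam * u
    rw [h2]; exact hΦ₂X
  -- σ commutes with D: subfield argument
  have hσ0 : σ 0 = 0 := map_zero σ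
  have hσne : ∀ x : L, x ≠ 0 → σ x ≠ 0 := by
    intro x hx h
    exact hx (σ.injective (by rw [h, hσ0]))
  have hDneg : ∀ x : L, D (-x) = -D x := by
    intro x
    have h := hadd x (-x)
    rw [add_neg_cancel, hD0] at h
    linear_combination -h
  have hDinv : ∀ x : L, x ≠ 0 → D x⁻¹ = -(D x * x⁻¹ * x⁻¹) := by
    intro x hx
    have h := hmul x x⁻¹
    rw [mul_inv_cancel₀ hx, hD1] at h
    have hxx : x * x⁻¹ = 1 := mul_inv_cancel₀ hx
    linear_combination (-x⁻¹) * h - D x⁻¹ * hxx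
  set S : Subfield L :=
    { carrier := {x | σ (D x) = D (σ x)}
      zero_mem' := by simp [Set.mem_setOf_eq, hD0, hσ0]
      one_mem' := by simp [Set.mem_setOf_eq, hD1, hσ0, map_one σ]
      add_mem' := by
        intro a b ha hb
        simp only [Set.mem_setOf_eq] at *
        rw [hadd, map_add, ha, hb, map_add, ← hadd]
      mul_mem' := by
        intro a b ha hb
        simp only [Set.mem_setOf_eq] at *
        rw [hmul, map_add, map_mul, map_mul, ha, hb, map_mul, ← hmul]
      neg_mem' := by
        intro a ha
        simp only [Set.mem_setOf_eq] at *
        rw [hDneg, map_neg, ha, map_neg, ← hDneg]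
      inv_mem' := by
        intro a ha
        simp only [Set.mem_setOf_eq] at *
        rcases eq_or_ne a 0 with rfl | ha0
        · simp [hD0, hσ0]
        · rw [hDinv a ha0, map_neg, map_mul, map_mul, ha, map_inv₀,
            ← hDinv _ (hσne a ha0)] } with hSdef
  have hKS : (K : Set L) ⊆ (S : Set L) := by
    intro x hx
    show σ (D x) = D (σ x)
    rw [hσK x hx, hσK _ (hKD x hx)]
  have huS : u ∈ S := by
    show σ (D u) = D (σ u)
    rw [hu, hσu, hmul, hlamD, hu]
    ring
  have hStop : S = ⊤ := by
    rw [eq_top_iff, ← hgen]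
    apply Subfield.closure_le.mpr
    rintro y (hy | hy)
    · exact hKS hy
    · simp only [Set.mem_singleton_iff] at hy; subst hy; exact huS
  refine ⟨σ, hσK, ?_, hσu⟩
  intro x
  have hx : x ∈ S := hStop ▸ Subfield.mem_top x
  exact hx
end

section
/- Let K be a differential field with constants C, L a differential field extension with the same constants C, and let y_1, ..., y_n ∈ L be solutions of a fixed homogeneous linear differential equation of order n over K with nonzero Wronskian. If z ∈ L is any other solution of the same equation, then z is a C-linear combination of y_1, ..., y_n. -/
/-- If `y 1, …, y n` are solutions with nonzero Wronskian of a homogeneous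
linear differential equation of order `n` over `K`, then any further solution
`z` in `L` is a linear combination of them with constant coefficients. -/
theorem solution_is_constant_combination_of_fundamental_system
    (L : Type*) [Field L] (D : L → L)
    (hadd : ∀ x y : L, D (x + y) = D x + D y)
    (hmul : ∀ x y : L, D (x * y) = x * D y + D x * y)
    (K : Subfield L) (hKD : ∀ x ∈ K, D x ∈ K)
    (hconst : ∀ x : L, D x = 0 → x ∈ K)
    (n : ℕ) (a : Fin n → L) (ha : ∀ i, a i ∈ K)
    (y : Fin n → L)
    (hy : ∀ j, D^[n] (y j) + ∑ i : Fin n, a i * D^[(i : ℕ)] (y j) = 0)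
    (hW : (Matrix.of fun i j : Fin n => D^[(i : ℕ)] (y j)).det ≠ 0)
    (z : L) (hz : D^[n] z + ∑ i : Fin n, a i * D^[(i : ℕ)] z = 0) :
    ∃ c : Fin n → L, (∀ i, D (c i) = 0) ∧ z = ∑ i, c i * y i := by
  classical
  rcases Nat.eq_zero_or_pos n with hn | hn
  · subst hn
    refine ⟨0, fun i => i.elim0, ?_⟩
    simpa using hz
  -- D as an additive monoid hom
  have hD0 : D 0 = 0 := by
    have h := hadd 0 0
    rw [add_zero] at h
    have h2 : D 0 + 0 = D 0 + D 0 := by rw [add_zero]; exact h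
    exact (add_left_cancel h2).symm
  set Dh : L →+ L := { toFun := D, map_zero' := hD0, map_add' := hadd } with hDh
  have hDsum : ∀ (f : Fin n → L), D (∑ j, f j) = ∑ j, D (f j) := by
    intro f; exact map_sum Dh f Finset.univ
  set M : Matrix (Fin n) (Fin n) L :=
    Matrix.of fun i j : Fin n => D^[(i : ℕ)] (y j) with hM
  have hMdet : IsUnit M.det := hW.isUnit
  set v : Fin n → L := fun i => D^[(i : ℕ)] z with hv
  set c : Fin n → L := M⁻¹.mulVec v with hc
  have hsys : M.mulVec c = v := by
    rw [hc, Matrix.mulVec_mulVec, Matrix.mul_nonsing_inv _ hMdet, Matrix.one_mulVec]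
  have hrow : ∀ i : Fin n, ∑ j, D^[(i : ℕ)] (y j) * c j = D^[(i : ℕ)] z := by
    intro i
    have := congrFun hsys i
    simpa [Matrix.mulVec, dotProduct, hM, hv] using this
  -- the shifted rows also hold
  have hrow' : ∀ i : Fin n, ∑ j, D^[(i : ℕ) + 1] (y j) * c j = D^[(i : ℕ) + 1] z := by
    intro i
    rcases lt_or_ge ((i : ℕ) + 1) n with hlt | hge
    · exact hrow ⟨(i : ℕ) + 1, hlt⟩
    · have hin : (i : ℕ) + 1 = n := le_antisymm i.isLt hge
      rw [hin]
      have hzn : D^[n] z = -∑ k : Fin n, a k * D^[(k : ℕ)] z :=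
        eq_neg_of_add_eq_zero_left hz
      have hyn : ∀ j, D^[n] (y j) = -∑ k : Fin n, a k * D^[(k : ℕ)] (y j) :=
        fun j => eq_neg_of_add_eq_zero_left (hy j)
      calc ∑ j, D^[n] (y j) * c j
          = ∑ j, (-∑ k : Fin n, a k * D^[(k : ℕ)] (y j)) * c j := by
            refine Finset.sum_congr rfl fun j _ => by rw [hyn j]
        _ = -∑ k : Fin n, a k * ∑ j, D^[(k : ℕ)] (y j) * c j := by
            simp only [neg_mul, Finset.sum_neg_distrib, Finset.sum_mul,
              Finset.mul_sum, mul_assoc]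
            exact congrArg Neg.neg Finset.sum_comm
        _ = -∑ k : Fin n, a k * D^[(k : ℕ)] z := by
            refine congrArg Neg.neg (Finset.sum_congr rfl fun k _ => ?_)
            rw [hrow k]
        _ = D^[n] z := hzn.symm
  -- differentiate the rows to get M * (D ∘ c) = 0
  have hDc : ∀ i : Fin n, ∑ j, D^[(i : ℕ)] (y j) * D (c j) = 0 := by
    intro i
    have hd := congrArg D (hrow i)
    rw [hDsum] at hd
    have hexp : ∀ j : Fin n,
        D (D^[(i : ℕ)] (y j) * c j)
          = D^[(i : ℕ)] (y j) * D (c j) + D^[(i : ℕ) + 1] (y j) * c j := by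
      intro j
      rw [hmul, Function.iterate_succ_apply']
    rw [Finset.sum_congr rfl fun j _ => hexp j, Finset.sum_add_distrib,
      hrow' i, Function.iterate_succ_apply'] at hd
    exact add_right_cancel (hd.trans (zero_add _).symm)
  have hDc0 : ∀ j, D (c j) = 0 := by
    have hmv : M.mulVec (fun j => D (c j)) = 0 := by
      funext i
      simpa [Matrix.mulVec, dotProduct, hM] using hDc i
    intro j
    have : (fun j => D (c j)) = M⁻¹.mulVec (M.mulVec fun j => D (c j)) := by
      rw [Matrix.mulVec_mulVec, Matrix.nonsing_inv_mul _ hMdet, Matrix.one_mulVec]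
    rw [hmv, Matrix.mulVec_zero] at this
    exact congrFun this j
  refine ⟨c, hDc0, ?_⟩
  have h0 := hrow ⟨0, hn⟩
  simp only [Function.iterate_zero, id_eq] at h0
  rw [← h0]
  exact Finset.sum_congr rfl fun j _ => (mul_comm _ _)
end
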